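/- For a Bell-diagonal two-qubit state ρ_λ with eigenvalues λ₁ ≥ λ₂ ≥ λ₃ ≥ λ₄, the concurrence equals max{0, 2λ₁ − 1}. -/

import Mathlib

/-!
The Bell states are real vectors and eigenvectors of `σy ⊗ σy` (with eigenvalues `±1`), so a
Bell-diagonal state `ρ` is invariant under the spin flip `ρ ↦ (σy ⊗ σy) ρ* (σy ⊗ σy)`. For such a
state `√ρ ρ̃ √ρ = ρ²`, so the square roots of its eigenvalues are the eigenvalues `λᵢ` of `ρ`: the
largest is `λ₁` and they sum to `tr ρ = 1`, whence `μ₁ − μ₂ − μ₃ − μ₄ = 2λ₁ − 1`.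
-/


open Matrix Kronecker Complex Real ComplexOrder

/-- 2×2 complex matrices (one qubit). -/
abbrev M2 := Matrix (Fin 2) (Fin 2) ℂ
/-- 4×4 complex matrices (two qubits), indexed by `Fin 2 × Fin 2`. -/
abbrev M4 := Matrix (Fin 2 × Fin 2) (Fin 2 × Fin 2) ℂ

noncomputable def σx : M2 := !![0, 1; 1, 0]
noncomputable def σy : M2 := !![0, -Complex.I; Complex.I, 0]
noncomputable def σz : M2 := !![1, 0; 0, -1]

/-- A ±1-valued qubit observable: Hermitian involution. -/
def IsObs (A : M2) : Prop := A.IsHermitian ∧ A * A = 1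

/-- A two-qubit density operator. -/
def IsState (ρ : M4) : Prop := ρ.PosSemidef ∧ ρ.trace = 1

/-- The α-CHSH Bell operator. -/
noncomputable def Sop (α : ℝ) (A0 A1 B0 B1 : M2) : M4 :=
  (α : ℂ) • (A0 ⊗ₖ B0 + A0 ⊗ₖ B1) + A1 ⊗ₖ B0 - A1 ⊗ₖ B1

/-- The α-CHSH Bell value of a state with given observables. -/
noncomputable def BellValue (ρ : M4) (α : ℝ) (A0 A1 B0 B1 : M2) : ℂ :=
  (ρ * Sop α A0 A1 B0 B1).trace

/-- Computational basis vectors of ℂ²⊗ℂ². -/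
def ket (i j : Fin 2) : Fin 2 × Fin 2 → ℂ := fun p => if p = (i, j) then 1 else 0

noncomputable def PhiP : Fin 2 × Fin 2 → ℂ := ((Real.sqrt 2 : ℂ))⁻¹ • (ket 0 0 + ket 1 1)
noncomputable def PhiM : Fin 2 × Fin 2 → ℂ := ((Real.sqrt 2 : ℂ))⁻¹ • (ket 0 0 - ket 1 1)
noncomputable def PsiP : Fin 2 × Fin 2 → ℂ := ((Real.sqrt 2 : ℂ))⁻¹ • (ket 0 1 + ket 1 0)
noncomputable def PsiM : Fin 2 × Fin 2 → ℂ := ((Real.sqrt 2 : ℂ))⁻¹ • (ket 0 1 - ket 1 0)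

/-- Rank-one projector |v⟩⟨v|. -/
noncomputable def proj (v : Fin 2 × Fin 2 → ℂ) : M4 := Matrix.vecMulVec v (star v)

/-- Bell-diagonal two-qubit state. -/
noncomputable def BellDiag (l1 l2 l3 l4 : ℝ) : M4 :=
  (l1 : ℂ) • proj PhiP + (l2 : ℂ) • proj PhiM + (l3 : ℂ) • proj PsiP + (l4 : ℂ) • proj PsiM

/-- The positive semidefinite square root of a positive semidefinite matrix
(Mathlib's former `Matrix.PosSemidef.sqrt`, removed upstream; restated with its old definition). -/
noncomputable def Matrix.PosSemidef.sqrt {n 𝕜 : Type*} [Fintype n] [RCLike 𝕜] [DecidableEq n]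
    {A : Matrix n n 𝕜} (hA : A.PosSemidef) : Matrix n n 𝕜 :=
  hA.1.eigenvectorUnitary.1 * diagonal ((↑) ∘ (√·) ∘ hA.1.eigenvalues) *
  (star hA.1.eigenvectorUnitary : Matrix n n 𝕜)

noncomputable def YY : M4 := σy ⊗ₖ σy

attribute [local instance] Classical.propDecidable

/-- Concurrence of a two-qubit state: `max {0, μ₁ − μ₂ − μ₃ − μ₄}` where the `μᵢ` are the
decreasingly ordered square roots of the eigenvalues of `√ρ (σy⊗σy) ρ* (σy⊗σy) √ρ`
(for the decreasingly ordered values, `μ₁ − μ₂ − μ₃ − μ₄ = 2 max μᵢ − ∑ μᵢ`). -/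
noncomputable def concurrence (ρ : M4) : ℝ :=
  if hρ : ρ.PosSemidef then
    if hX : (hρ.sqrt * (YY * ρ.map (starRingEnd ℂ) * YY) * hρ.sqrt).IsHermitian then
      let μ : Fin 2 × Fin 2 → ℝ := fun p => Real.sqrt (hX.eigenvalues p)
      max 0 (2 * (Finset.univ.sup' Finset.univ_nonempty μ) - ∑ p, μ p)
    else 0
  else 0

namespace Matrix.PosSemidef

variable {n 𝕜 : Type*} [Fintype n] [DecidableEq n] [RCLike 𝕜]

open scoped MatrixOrder

theorem sqrt_eq_cfcSqrt {A : Matrix n n 𝕜} (hA : A.PosSemidef) : hA.sqrt = CFC.sqrt A := by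
  rw [CFC.sqrt_eq_cfc, cfc_nnreal_eq_real _ A hA.nonneg, hA.1.cfc_eq]
  simp only [Matrix.PosSemidef.sqrt, IsHermitian.cfc, Unitary.conjStarAlgAut_apply]
  unfold Real.sqrt
  congr

theorem sqrt_mul_sqrt {A : Matrix n n 𝕜} (hA : A.PosSemidef) : hA.sqrt * hA.sqrt = A := by
  rw [sqrt_eq_cfcSqrt]
  exact CFC.sqrt_mul_sqrt_self A hA.nonneg

theorem sqrt_mul_mul_sqrt {A : Matrix n n 𝕜} (hA : A.PosSemidef) :
    hA.sqrt * A * hA.sqrt = A * A := by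
  have h := hA.sqrt_mul_sqrt
  generalize hA.sqrt = S at h ⊢
  rw [← h]
  simp only [mul_assoc]

theorem sqrt_mul_self_eq {B : Matrix n n 𝕜} (hB : B.PosSemidef) (hBB : (B * B).PosSemidef) :
    hBB.sqrt = B := by
  rw [sqrt_eq_cfcSqrt]
  exact CFC.sqrt_unique rfl hB.nonneg

theorem trace_sqrt {A : Matrix n n 𝕜} (hA : A.PosSemidef) :
    hA.sqrt.trace = ∑ i, (√(hA.1.eigenvalues i) : 𝕜) := by
  rw [Matrix.PosSemidef.sqrt, trace_mul_cycle, Unitary.coe_star_mul_self, one_mul,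
    trace_diagonal]
  rfl

theorem sum_sqrt_eigenvalues_mul_self {B : Matrix n n 𝕜} (hB : B.PosSemidef)
    (hBB : (B * B).PosSemidef) : ∑ i, √(hBB.1.eigenvalues i) = RCLike.re B.trace := by
  have h := hBB.trace_sqrt
  rw [sqrt_mul_self_eq hB hBB, ← RCLike.ofReal_sum] at h
  rw [h, RCLike.ofReal_re]

theorem image_sqrt_spectrum_mul_self {B : Matrix n n 𝕜} (hB : B.PosSemidef) :
    Real.sqrt '' spectrum ℝ (B * B) = spectrum ℝ B := by
  have hB_sa : IsSelfAdjoint B := hB.1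
  rw [← pow_two, ← cfc_pow_id (R := ℝ) B 2, cfc_map_spectrum (R := ℝ) _ B, Set.image_image]
  conv_rhs => rw [← Set.image_id (spectrum ℝ B)]
  refine Set.image_congr fun x hx => Real.sqrt_sq ?_
  rw [hB.1.spectrum_real_eq_range_eigenvalues] at hx
  obtain ⟨i, rfl⟩ := hx
  exact hB.eigenvalues_nonneg i

end Matrix.PosSemidef

theorem Matrix.IsHermitian.sup'_comp_eigenvalues {n 𝕜 : Type*} [Fintype n] [DecidableEq n]
    [Nonempty n] [RCLike 𝕜] {A : Matrix n n 𝕜} (hA : A.IsHermitian) (f : ℝ → ℝ) :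
    Finset.univ.sup' Finset.univ_nonempty (fun i => f (hA.eigenvalues i)) =
      sSup (f '' spectrum ℝ A) := by
  rw [Finset.sup'_eq_csSup_image, Finset.coe_univ, Set.image_univ,
    hA.spectrum_real_eq_range_eigenvalues, ← Set.range_comp]
  rfl

noncomputable def spinFlip (ρ : M4) : M4 := YY * ρ.map (starRingEnd ℂ) * YY

theorem concurrence_eq_of_spinFlip_eq {ρ : M4} (hρ : ρ.PosSemidef) (hflip : spinFlip ρ = ρ) :
    concurrence ρ = max 0 (2 * sSup (spectrum ℝ ρ) - ρ.trace.re) := by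
  have hR : hρ.sqrt * spinFlip ρ * hρ.sqrt = ρ * ρ := by
    rw [hflip, hρ.sqrt_mul_mul_sqrt]
  have hρρ : (ρ * ρ).PosSemidef := by
    simpa only [hρ.1.eq] using posSemidef_conjTranspose_mul_self ρ
  rw [concurrence, dif_pos hρ, ← spinFlip.eq_1]
  simp only [hR, dif_pos hρρ.1]
  rw [hρρ.1.sup'_comp_eigenvalues, hρ.image_sqrt_spectrum_mul_self,
    hρ.sum_sqrt_eigenvalues_mul_self hρρ]
  rfl

section SpectralSum

variable {n ι : Type*} [Fintype ι]

noncomputable def spectralSum (v : ι → n → ℂ) (c : ι → ℝ) : Matrix n n ℂ :=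
  ∑ i, (c i : ℂ) • vecMulVec (v i) (star (v i))

theorem posSemidef_spectralSum [Fintype n] (v : ι → n → ℂ) {c : ι → ℝ} (hc : ∀ i, 0 ≤ c i) :
    (spectralSum v c).PosSemidef :=
  posSemidef_sum _ fun i _ =>
    (posSemidef_vecMulVec_self_star (v i)).smul (Complex.zero_le_real.mpr (hc i))

theorem map_conj_spectralSum (v : ι → n → ℂ) (c : ι → ℝ) :
    (spectralSum v c).map (starRingEnd ℂ) = spectralSum (star v) c := by
  ext p q
  simp [spectralSum, Matrix.sum_apply, vecMulVec_apply]

theorem mul_spectralSum_mul_conjTranspose [Fintype n] (A : Matrix n n ℂ) (v : ι → n → ℂ)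
    (c : ι → ℝ) : A * spectralSum v c * Aᴴ = spectralSum (fun i => A *ᵥ v i) c := by
  simp only [spectralSum, Finset.mul_sum, Finset.sum_mul, Matrix.mul_smul, Matrix.smul_mul,
    mul_vecMulVec, vecMulVec_mul, star_mulVec]

theorem spectralSum_congr_of_eq_or_eq_neg {v w : ι → n → ℂ} (h : ∀ i, w i = v i ∨ w i = -v i) (c : ι → ℝ) :
    spectralSum w c = spectralSum v c := by
  refine Finset.sum_congr rfl fun i _ => ?_
  rcases h i with h | h <;> simp [h]

theorem spectralSum_const [Fintype n] [DecidableEq n] {v : ι → n → ℂ}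
    (hcomp : ∑ i, vecMulVec (v i) (star (v i)) = 1) (μ : ℝ) :
    spectralSum v (fun _ => μ) = algebraMap ℝ (Matrix n n ℂ) μ := by
  rw [spectralSum, ← Finset.smul_sum, hcomp, Algebra.algebraMap_eq_smul_one, Complex.coe_smul]

theorem algebraMap_sub_spectralSum [Fintype n] [DecidableEq n] {v : ι → n → ℂ}
    (hcomp : ∑ i, vecMulVec (v i) (star (v i)) = 1) (μ : ℝ) (c : ι → ℝ) :
    algebraMap ℝ (Matrix n n ℂ) μ - spectralSum v c = spectralSum v (fun i => μ - c i) := by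
  simp [← spectralSum_const hcomp, spectralSum, sub_smul, Finset.sum_sub_distrib]

variable [DecidableEq ι]

theorem spectralSum_mul [Fintype n] {v : ι → n → ℂ}
    (hv : ∀ i j, star (v i) ⬝ᵥ v j = if i = j then 1 else 0)
    (c d : ι → ℝ) : spectralSum v c * spectralSum v d = spectralSum v (c * d) := by
  simp only [spectralSum, Finset.sum_mul, Finset.mul_sum, Matrix.smul_mul, Matrix.mul_smul,
    vecMulVec_mul_vecMulVec, hv, smul_smul, ite_smul, one_smul, zero_smul]
  simp [apply_ite (vecMulVec _), mul_comm]

theorem trace_spectralSum [Fintype n] {v : ι → n → ℂ}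
    (hv : ∀ i j, star (v i) ⬝ᵥ v j = if i = j then 1 else 0) (c : ι → ℝ) :
    (spectralSum v c).trace = ∑ i, (c i : ℂ) := by
  simp [spectralSum, trace_sum, dotProduct_comm (v _), hv]

theorem spectralSum_mulVec [Fintype n] {v : ι → n → ℂ}
    (hv : ∀ i j, star (v i) ⬝ᵥ v j = if i = j then 1 else 0) (c : ι → ℝ) (j : ι) :
    spectralSum v c *ᵥ v j = (c j : ℂ) • v j := by
  simp [spectralSum, Matrix.sum_mulVec, smul_mulVec, vecMulVec_mulVec, hv]

theorem spectrum_spectralSum [Fintype n] [DecidableEq n] {v : ι → n → ℂ}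
    (hv : ∀ i j, star (v i) ⬝ᵥ v j = if i = j then 1 else 0)
    (hcomp : ∑ i, vecMulVec (v i) (star (v i)) = 1) (c : ι → ℝ) :
    spectrum ℝ (spectralSum v c) = Set.range c := by
  ext μ
  rw [spectrum.mem_iff, algebraMap_sub_spectralSum hcomp, Matrix.isUnit_iff_isUnit_det,
    isUnit_iff_ne_zero, not_not]
  constructor
  · intro hdet
    by_contra hμ
    have hne : ∀ i, μ - c i ≠ 0 := fun i h => hμ ⟨i, (sub_eq_zero.mp h).symm⟩
    have hinv : spectralSum v (fun i => μ - c i) * spectralSum v (fun i => (μ - c i)⁻¹) = 1 := by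
      rw [spectralSum_mul hv, ← map_one (algebraMap ℝ (Matrix n n ℂ)), ← spectralSum_const hcomp]
      exact congrArg _ (funext fun i => mul_inv_cancel₀ (hne i))
    exact (isUnit_det_of_right_inverse hinv).ne_zero hdet
  · rintro ⟨i, rfl⟩
    refine Matrix.exists_mulVec_eq_zero_iff.mp ⟨v i, fun h => ?_, ?_⟩
    · simpa [h] using hv i i
    · simp [spectralSum_mulVec hv]

end SpectralSum

noncomputable def bellBasis : Fin 4 → Fin 2 × Fin 2 → ℂ := ![PhiP, PhiM, PsiP, PsiM]

theorem ofReal_sqrt_two_inv_mul_self : ((√2 : ℝ) : ℂ)⁻¹ * ((√2 : ℝ) : ℂ)⁻¹ = 2⁻¹ := by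
  rw [← mul_inv, ← Complex.ofReal_mul, Real.mul_self_sqrt zero_le_two, Complex.ofReal_ofNat]

theorem star_bellBasis : star bellBasis = bellBasis := by
  funext i p
  fin_cases i <;> simp [bellBasis, PhiP, PhiM, PsiP, PsiM, ket, apply_ite (starRingEnd ℂ)]

theorem bellBasis_orthonormal (i j : Fin 4) :
    star (bellBasis i) ⬝ᵥ bellBasis j = if i = j then 1 else 0 := by
  fin_cases i <;> fin_cases j <;>
    simp [bellBasis, PhiP, PhiM, PsiP, PsiM, ket, dotProduct, Fintype.sum_prod_type,
      Prod.ext_iff, ofReal_sqrt_two_inv_mul_self] <;>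
      norm_num

theorem sum_vecMulVec_bellBasis :
    ∑ i, vecMulVec (bellBasis i) (star (bellBasis i)) = 1 := by
  ext p q
  fin_cases p <;> fin_cases q <;>
    simp [bellBasis, PhiP, PhiM, PsiP, PsiM, ket, vecMulVec_apply, Fin.sum_univ_four,
      Prod.ext_iff, one_apply, ofReal_sqrt_two_inv_mul_self] <;> norm_num

theorem conjTranspose_YY : YYᴴ = YY := by
  rw [YY, conjTranspose_kronecker]
  congr <;> ext i j <;> fin_cases i <;> fin_cases j <;> simp [σy]

theorem YY_mulVec_bellBasis (i : Fin 4) :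
    YY *ᵥ bellBasis i = bellBasis i ∨ YY *ᵥ bellBasis i = -bellBasis i := by
  fin_cases i <;> [right; left; left; right] <;> ext ⟨a, b⟩ <;> fin_cases a <;> fin_cases b <;>
    simp [YY, σy, bellBasis, PhiP, PhiM, PsiP, PsiM, ket, mulVec, dotProduct,
      Fintype.sum_prod_type, Prod.ext_iff]

theorem bellDiag_eq_spectralSum (l1 l2 l3 l4 : ℝ) :
    BellDiag l1 l2 l3 l4 = spectralSum bellBasis ![l1, l2, l3, l4] := by
  simp [BellDiag, spectralSum, Fin.sum_univ_four, bellBasis, proj]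

theorem spinFlip_spectralSum_bellBasis (c : Fin 4 → ℝ) :
    spinFlip (spectralSum bellBasis c) = spectralSum bellBasis c := by
  rw [spinFlip, map_conj_spectralSum, star_bellBasis]
  nth_rw 2 [← conjTranspose_YY]
  rw [mul_spectralSum_mul_conjTranspose]
  exact spectralSum_congr_of_eq_or_eq_neg YY_mulVec_bellBasis c

theorem spectrum_bellDiag (l1 l2 l3 l4 : ℝ) :
    spectrum ℝ (BellDiag l1 l2 l3 l4) = Set.range ![l1, l2, l3, l4] := by
  rw [bellDiag_eq_spectralSum,
    spectrum_spectralSum bellBasis_orthonormal sum_vecMulVec_bellBasis]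

theorem trace_bellDiag (l1 l2 l3 l4 : ℝ) :
    (BellDiag l1 l2 l3 l4).trace = ((l1 + l2 + l3 + l4 : ℝ) : ℂ) := by
  push_cast
  simp [bellDiag_eq_spectralSum, trace_spectralSum bellBasis_orthonormal, Fin.sum_univ_four]

/-- The concurrence of a Bell-diagonal state with decreasingly ordered eigenvalues
`λ₁ ≥ λ₂ ≥ λ₃ ≥ λ₄ ≥ 0` equals `max {0, 2λ₁ − 1}`. -/
theorem concurrence_bellDiag (l1 l2 l3 l4 : ℝ)
    (h12 : l2 ≤ l1) (h23 : l3 ≤ l2) (h34 : l4 ≤ l3) (h4 : 0 ≤ l4)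
    (hsum : l1 + l2 + l3 + l4 = 1) :
    concurrence (BellDiag l1 l2 l3 l4) = max 0 (2 * l1 - 1) := by
  have hbounds : ∀ i, 0 ≤ ![l1, l2, l3, l4] i ∧ ![l1, l2, l3, l4] i ≤ l1 := by
    intro i
    fin_cases i <;> constructor <;> simp <;> linarith
  have hρ : (BellDiag l1 l2 l3 l4).PosSemidef := by
    rw [bellDiag_eq_spectralSum]
    exact posSemidef_spectralSum _ fun i => (hbounds i).1
  have hflip : spinFlip (BellDiag l1 l2 l3 l4) = BellDiag l1 l2 l3 l4 := by
    rw [bellDiag_eq_spectralSum, spinFlip_spectralSum_bellBasis]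
  have hmax : sSup (Set.range ![l1, l2, l3, l4]) = l1 :=
    IsGreatest.csSup_eq ⟨⟨0, rfl⟩, Set.forall_mem_range.2 fun i => (hbounds i).2⟩
  rw [concurrence_eq_of_spinFlip_eq hρ hflip, spectrum_bellDiag, hmax, trace_bellDiag, hsum,
    Complex.ofReal_one, Complex.one_re]
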